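/- arXiv:1803.01464 — 2 statements merged into one kernel-verified Lean document; each statement's English description precedes it below -/
import Mathlib

section
/- Energy theorem in dimension one: the sum of all matrix entries of the inverse L⁻¹ = L − |H| of the connection Laplacian equals the Euler characteristic v − e of G, i.e. ∑_{x∈S} ∑_{y∈S} (L − |H|)(x,y) = v − e. -/
open Matrix

variable {V : Type*} [Fintype V] [DecidableEq V]

/-- The simplices of the 1-dimensional simplicial complex of a graph: vertices and edges. -/
abbrev Simplex (G : SimpleGraph V) [DecidableRel G.Adj] := V ⊕ G.edgeSet

variable (G : SimpleGraph V) [DecidableRel G.Adj]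

/-- The vertex set of a simplex. -/
def sVerts : Simplex G → Set V
  | Sum.inl u => {u}
  | Sum.inr f => {w | w ∈ (f : Sym2 V)}

instance (x : Simplex G) (w : V) : Decidable (w ∈ sVerts G x) :=
  match x with
  | Sum.inl u => decidable_of_iff (w = u) (by simp [sVerts])
  | Sum.inr f => decidable_of_iff (w ∈ (f : Sym2 V)) (by simp [sVerts])

/-- Two simplices touch if their vertex sets intersect. -/
def touches (x y : Simplex G) : Prop := ∃ w, w ∈ sVerts G x ∧ w ∈ sVerts G y

instance : DecidableRel (touches G) := fun _ _ => Fintype.decidableExistsFintype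

/-- The connection Laplacian. -/
def connL : Matrix (Simplex G) (Simplex G) ℤ :=
  Matrix.of fun x y => if touches G x y then 1 else 0

/-- The sign-less incidence matrix. -/
def absd : Matrix (Simplex G) (Simplex G) ℤ :=
  Matrix.of fun a b =>
    match a, b with
    | Sum.inr f, Sum.inl u => if u ∈ (f : Sym2 V) then 1 else 0
    | _, _ => 0

/-- The sign-less Hodge Laplacian. -/
def absH : Matrix (Simplex G) (Simplex G) ℤ := (absd G + (absd G)ᵀ) ^ 2

/-! Order the simplices as vertices first, then edges, and let `B` be the edge–vertex incidence
matrix. Then `|d| + |d|ᵀ = [[0, Bᵀ], [B, 0]]`, so `|H| = [[BᵀB, 0], [0, BBᵀ]]`, while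
`L = [[1, Bᵀ], [B, BBᵀ - 1]]` because two distinct edges share at most one vertex and an edge
shares two with itself. Hence `L - |H| = [[1 - BᵀB, Bᵀ], [B, -1]]`, and since every row of `B`
sums to `2`, its entries add up to `v - 4e + 2e + 2e - e = v - e`. -/

open Finset

namespace Matrix

variable {l m n o R : Type*} [Fintype l] [Fintype m] [Fintype n] [Fintype o]

lemma sum_sum_mul_apply [NonUnitalNonAssocSemiring R] (A : Matrix l m R) (B : Matrix m n R) :
    ∑ i, ∑ j, (A * B) i j = ∑ k, (∑ i, A i k) * ∑ j, B k j := by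
  simp only [mul_apply, sum_mul_sum]
  calc ∑ i, ∑ j, ∑ k, A i k * B k j = ∑ i, ∑ k, ∑ j, A i k * B k j :=
        sum_congr rfl fun _ _ => sum_comm
    _ = _ := sum_comm

lemma sum_sum_transpose_apply [AddCommMonoid R] (A : Matrix m n R) :
    ∑ i, ∑ j, Aᵀ i j = ∑ i, ∑ j, A i j :=
  sum_comm

lemma sum_sum_one_apply [DecidableEq n] [AddCommMonoidWithOne R] :
    ∑ i, ∑ j, (1 : Matrix n n R) i j = (Fintype.card n : R) := by
  simp [one_apply]

lemma sum_sum_fromBlocks_apply [AddCommMonoid R] (A : Matrix l n R) (B : Matrix l o R)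
    (C : Matrix m n R) (D : Matrix m o R) :
    ∑ i, ∑ j, fromBlocks A B C D i j
      = (∑ i, ∑ j, A i j) + (∑ i, ∑ j, B i j) + ((∑ i, ∑ j, C i j) + ∑ i, ∑ j, D i j) := by
  simp only [Fintype.sum_sum_type, fromBlocks_apply₁₁, fromBlocks_apply₁₂, fromBlocks_apply₂₁,
    fromBlocks_apply₂₂, sum_add_distrib]
  exact add_add_add_comm ..

end Matrix

namespace SimpleGraph

variable {V : Type*} [Fintype V] [DecidableEq V] (G : SimpleGraph V)

def edgeIncidence : Matrix G.edgeSet V ℤ :=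
  Matrix.of fun f u => if u ∈ (f : Sym2 V) then 1 else 0

lemma sum_edgeIncidence_apply (f : G.edgeSet) : ∑ u, G.edgeIncidence f u = 2 := by
  simp only [edgeIncidence, Matrix.of_apply, sum_boole]
  have hf : ({u | u ∈ (f : Sym2 V)} : Finset V) = (f : Sym2 V).toFinset := by ext; simp
  rw [hf, Sym2.card_toFinset_of_not_isDiag _ (G.not_isDiag_of_mem_edgeSet f.2)]
  rfl

lemma edgeIncidence_mul_transpose_apply (f g : G.edgeSet) :
    (G.edgeIncidence * G.edgeIncidenceᵀ) f g
      = (if ∃ w, w ∈ (f : Sym2 V) ∧ w ∈ (g : Sym2 V) then 1 else 0) + if f = g then 1 else 0 := by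
  have hcard : (G.edgeIncidence * G.edgeIncidenceᵀ) f g
      = #{w | w ∈ (f : Sym2 V) ∧ w ∈ (g : Sym2 V)} := by
    simp only [Matrix.mul_apply, Matrix.transpose_apply, edgeIncidence, Matrix.of_apply,
      boole_mul, ← ite_and, sum_boole]
  rw [hcard]
  rcases eq_or_ne f g with rfl | hfg
  · have h2 := G.sum_edgeIncidence_apply f
    simp only [edgeIncidence, Matrix.of_apply, sum_boole] at h2
    simp only [and_self, h2, if_true]
    rw [if_pos ⟨_, Sym2.out_fst_mem _⟩]
    norm_num
  · have hle : #{w | w ∈ (f : Sym2 V) ∧ w ∈ (g : Sym2 V)} ≤ 1 := by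
      refine card_le_one.mpr fun a ha b hb => by_contra fun hab => hfg ?_
      simp only [mem_filter, mem_univ, true_and] at ha hb
      exact Subtype.ext (Sym2.eq_of_ne_mem hab ha.1 hb.1 ha.2 hb.2)
    rw [if_neg hfg, add_zero]
    split_ifs with h
    · obtain ⟨w, hw⟩ := h
      have hpos : 0 < #{w | w ∈ (f : Sym2 V) ∧ w ∈ (g : Sym2 V)} :=
        card_pos.mpr ⟨w, by simpa using hw⟩
      exact_mod_cast le_antisymm hle hpos
    · simpa [filter_eq_empty_iff] using h

lemma sum_sum_edgeIncidence_apply [Fintype G.edgeSet] :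
    ∑ f, ∑ u, G.edgeIncidence f u = 2 * Fintype.card G.edgeSet := by
  simp [sum_edgeIncidence_apply, mul_comm]

lemma sum_sum_transpose_mul_edgeIncidence_apply [Fintype G.edgeSet] :
    ∑ u, ∑ w, (G.edgeIncidenceᵀ * G.edgeIncidence) u w = 4 * Fintype.card G.edgeSet := by
  simp only [Matrix.sum_sum_mul_apply, Matrix.transpose_apply, sum_edgeIncidence_apply]
  simp [mul_comm]

end SimpleGraph

open SimpleGraph

lemma absH_eq_fromBlocks : absH G = fromBlocks (G.edgeIncidenceᵀ * G.edgeIncidence) 0 0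
    (G.edgeIncidence * G.edgeIncidenceᵀ) := by
  have hd : absd G = fromBlocks 0 0 G.edgeIncidence 0 := by
    ext (u | f) (w | g) <;> simp [absd, edgeIncidence]
  rw [absH, hd, fromBlocks_transpose, fromBlocks_add, sq, fromBlocks_multiply]
  simp

lemma connL_eq_fromBlocks : connL G = fromBlocks 1 G.edgeIncidenceᵀ G.edgeIncidence
    (G.edgeIncidence * G.edgeIncidenceᵀ - 1) := by
  ext (u | f) (w | g)
  · simp [connL, touches, sVerts, one_apply]
  · simp [connL, touches, sVerts, edgeIncidence]
  · simp [connL, touches, sVerts, edgeIncidence]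
  · simp [connL, touches, sVerts, edgeIncidence_mul_transpose_apply, one_apply]

lemma connL_sub_absH_eq_fromBlocks : connL G - absH G = fromBlocks
    (1 - G.edgeIncidenceᵀ * G.edgeIncidence) G.edgeIncidenceᵀ G.edgeIncidence (-1) := by
  rw [connL_eq_fromBlocks, absH_eq_fromBlocks]
  ext (i | i) (j | j) <;> simp

/-- Energy theorem in dimension one: the total sum of the entries of the inverse
`L⁻¹ = L - |H|` of the connection Laplacian equals the Euler characteristic `v - e`. -/
theorem energy_theorem :
    ∑ x : Simplex G, ∑ y : Simplex G, (connL G - absH G) x y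
      = (Fintype.card V : ℤ) - (Fintype.card G.edgeSet : ℤ) := by
  rw [connL_sub_absH_eq_fromBlocks, sum_sum_fromBlocks_apply]
  simp only [Matrix.sub_apply, Matrix.neg_apply, sum_sub_distrib, sum_neg_distrib,
    sum_sum_one_apply, sum_sum_transpose_apply, sum_sum_transpose_mul_edgeIncidence_apply, sum_sum_edgeIncidence_apply]
  ring
end

section
/- Symplectic Kirby connection: if the total number v + e of simplices is even, say v + e = 2l, then L² is similar over ℚ to a symplectic matrix; that is, there exist a bijection of S with Fin l ⊕ Fin l and an invertible rational 2l×2l matrix P such that P⁻¹·(L²)·P lies in the symplectic group Sp(2l, ℚ) (the matrices M with MᵀJM = J for the standard symplectic form J). -/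
/-!
Write `L = [[1, N], [Nᵀ, NᵀN - 1]]` in blocks, `N` the vertex–edge incidence matrix, and let
`K = [[0, -N], [Nᵀ, 0]]`. Then `L K L = -K`, so `M = L²` preserves the skew form `K`, and
`L² = 1 + Y K`, so `M` fixes `ker K` pointwise. As `ker K ≅ ker Nᵀ × ker N` has even dimension
`v + e - 2 rank N = 2k`, the columns `C` of a basis of `ker K` give the invertible skew form
`K' = K + C J Cᵀ`, still preserved by `M`. In a symplectic basis for `K'` the matrix of `M` lies
in `Sp(2l, ℚ)`.
-/

open Matrix

variable {V : Type*} [Fintype V] [DecidableEq V]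

variable (G : SimpleGraph V) [DecidableRel G.Adj]

/-- The connection Laplacian as a rational matrix. -/
def connLQ : Matrix (Simplex G) (Simplex G) ℚ := (connL G).map (Int.cast : ℤ → ℚ)

open Module
open LinearMap (BilinForm ker range)

lemma Submodule.finrank_prod_eq {K M M' : Type*} [DivisionRing K] [AddCommGroup M] [Module K M]
    [AddCommGroup M'] [Module K M'] (p : Submodule K M) (q : Submodule K M')
    [FiniteDimensional K p] [FiniteDimensional K q] :
    finrank K (p.prod q) = finrank K p + finrank K q :=
  calc finrank K (p.prod q) = finrank K (range (p.subtype.prodMap q.subtype)) := by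
        rw [LinearMap.range_prodMap, Submodule.range_subtype, Submodule.range_subtype]
    _ = finrank K (p × q) := LinearMap.finrank_range_of_inj <|
        Prod.map_injective.mpr ⟨p.injective_subtype, q.injective_subtype⟩
    _ = finrank K p + finrank K q := finrank_prod

namespace LinearMap.BilinForm
variable {F W : Type*} [Field F] [AddCommGroup W] [Module F W] {B : BilinForm F W}

lemma linearIndependent_of_det_ne_zero {ι : Type*} [Fintype ι] [DecidableEq ι] {v : ι → W}
    (h : (Matrix.of fun i j => B (v i) (v j)).det ≠ 0) : LinearIndependent F v := by
  rw [Fintype.linearIndependent_iff]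
  intro a ha
  refine congrFun (eq_zero_of_vecMul_eq_zero h (funext fun j => ?_))
  simpa [vecMul, dotProduct, sum_left, mul_comm] using congrArg (B · (v j)) ha

lemma Nondegenerate.exists_apply_eq_neg_one [Nontrivial W] (hB : B.Nondegenerate) :
    ∃ x y, B x y = -1 := by
  obtain ⟨x, hx⟩ := exists_ne (0 : W)
  obtain ⟨y, hy⟩ : ∃ y, B x y ≠ 0 := by
    by_contra! h
    exact hx (hB.1 x h)
  exact ⟨x, -(B x y)⁻¹ • y, by simp [hy]⟩

lemma IsAlt.linearIndependent_pair (hB : B.IsAlt) {x y : W} (hxy : B x y = -1) :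
    LinearIndependent F ![x, y] :=
  linearIndependent_of_det_ne_zero (B := B) <| by
    simp [det_fin_two, hB x, hB y, hxy, ← hB.neg_eq x y]

lemma IsAlt.isCompl_span_pair_orthogonal [FiniteDimensional F W] (hB : B.IsAlt) {x y : W}
    (hxy : B x y = -1) :
    IsCompl (Submodule.span F (Set.range ![x, y]))
      (B.orthogonal (Submodule.span F (Set.range ![x, y]))) := by
  refine B.isCompl_orthogonal_of_restrict_nondegenerate hB.isRefl
    (B.nondegenerate_restrict_of_disjoint_orthogonal hB.isRefl ?_)
  rw [Submodule.disjoint_def]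
  intro z hzU hzO
  obtain ⟨c, rfl⟩ := (Submodule.mem_span_range_iff_exists_fun F).mp hzU
  have h0 := hzO x (Submodule.subset_span ⟨0, rfl⟩)
  have h1 := hzO y (Submodule.subset_span ⟨1, rfl⟩)
  simp [Fin.sum_univ_two, hB x, hB y, hxy, ← hB.neg_eq x y] at h0 h1
  simp [Fin.sum_univ_two, h0, h1]

theorem IsAlt.exists_basis_apply_eq_J [FiniteDimensional F W] (hB : B.IsAlt)
    (hnd : B.Nondegenerate) {l : ℕ} (hW : finrank F W = 2 * l) :
    ∃ b : Basis (Fin l ⊕ Fin l) F W, ∀ i j, B (b i) (b j) = J (Fin l) F i j := by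
  induction l generalizing W with
  | zero =>
    have : Subsingleton W := finrank_zero_iff.mp hW
    exact ⟨Basis.empty W, fun i => isEmptyElim i⟩
  | succ l ih =>
    have : Nontrivial W := nontrivial_of_finrank_pos (R := F) (by omega)
    obtain ⟨x, y, hxy⟩ := hnd.exists_apply_eq_neg_one
    have hyx : B y x = 1 := by rw [← hB.neg_eq, hxy, neg_neg]
    set U := Submodule.span F (Set.range ![x, y])
    set O := B.orthogonal U
    have hcompl : IsCompl U O := hB.isCompl_span_pair_orthogonal hxy
    have hndO : (B.restrict O).Nondegenerate :=
      (B.restrict_nondegenerate_iff_isCompl_orthogonal hB.isRefl).mpr <| by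
        rw [B.orthogonal_orthogonal hnd hB.isRefl]
        exact hcompl.symm
    have hO : finrank F O = 2 * l := by
      have := Submodule.finrank_add_eq_of_isCompl hcompl
      rw [finrank_span_eq_card (hB.linearIndependent_pair hxy)] at this
      simp only [Fintype.card_fin] at this
      omega
    obtain ⟨bO, hbO⟩ := ih (B := B.restrict O) (fun z => hB z) hndO hO
    have hbO' (i j) : B (bO i) (bO j) = J (Fin l) F i j := hbO i j
    have hxO (z : O) : B x z = 0 := z.2 x (Submodule.subset_span ⟨0, rfl⟩)
    have hyO (z : O) : B y z = 0 := z.2 y (Submodule.subset_span ⟨1, rfl⟩)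
    have hOx (z : O) : B z x = 0 := hB.isRefl _ _ (hxO z)
    have hOy (z : O) : B z y = 0 := hB.isRefl _ _ (hyO z)
    let v : Fin (l + 1) ⊕ Fin (l + 1) → W :=
      Sum.elim (Fin.cons x fun k => bO (.inl k)) (Fin.cons y fun k => bO (.inr k))
    have hv : ∀ i j, B (v i) (v j) = J (Fin (l + 1)) F i j := by
      rintro (i | i) (j | j) <;> cases i using Fin.cases <;> cases j using Fin.cases <;>
        simp [v, J, one_apply, hB x, hB y, hxy, hyx, hxO, hyO, hOx, hOy, hbO',
          Fin.succ_ne_zero, (Fin.succ_ne_zero _).symm]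
    have hli : LinearIndependent F v := linearIndependent_of_det_ne_zero (B := B) <| by
      rw [show (Matrix.of fun i j => B (v i) (v j)) = J (Fin (l + 1)) F from Matrix.ext hv]
      exact (isUnit_det_J _ _).ne_zero
    refine ⟨basisOfLinearIndependentOfCardEqFinrank hli (by simp [hW]; ring), ?_⟩
    simpa using hv

end LinearMap.BilinForm

namespace Matrix

section Symplectic
variable {F : Type*} [Field F] [CharZero F] {l : ℕ}

theorem exists_isUnit_transpose_mul_mul_eq_J
    {A : Matrix (Fin l ⊕ Fin l) (Fin l ⊕ Fin l) F} (hA : Aᵀ = -A) (hdet : A.det ≠ 0) :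
    ∃ P, IsUnit P ∧ Pᵀ * A * P = J (Fin l) F := by
  have halt : (toBilin' A).IsAlt := fun x => by
    rw [toBilin'_apply', ← CharZero.eq_neg_self_iff]
    conv_lhs => rw [dotProduct_mulVec, ← mulVec_transpose, hA, neg_mulVec, dotProduct_comm,
      dotProduct_neg]
  obtain ⟨b, hb⟩ := halt.exists_basis_apply_eq_J
    (LinearMap.BilinForm.nondegenerate_toBilin'_iff_det_ne_zero.mpr hdet) (l := l) (by simp; ring)
  let := (Pi.basisFun F _).invertibleToMatrix b
  refine ⟨(Pi.basisFun F _).toMatrix b, isUnit_of_invertible _, ?_⟩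
  conv_lhs => rw [← LinearMap.BilinForm.toMatrix'_toBilin' A,
    ← LinearMap.BilinForm.toMatrix_basisFun]
  rw [LinearMap.BilinForm.toMatrix_mul_basis_toMatrix]
  ext i j
  rw [LinearMap.BilinForm.toMatrix_apply, hb]

theorem exists_isUnit_inv_mul_reindex_mul_mem_symplecticGroup
    {n : Type*} [Fintype n] [DecidableEq n] (e : n ≃ Fin l ⊕ Fin l) {M A : Matrix n n F}
    (hA : Aᵀ = -A) (hdet : A.det ≠ 0) (hMA : Mᵀ * A * M = A) :
    ∃ P, IsUnit P ∧ P⁻¹ * reindex e e M * P ∈ symplecticGroup (Fin l) F := by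
  set M' := reindex e e M
  set A' := reindex e e A
  have hMA' : M'ᵀ * A' * M' = A' := by
    simp only [M', A', reindex_apply, transpose_submatrix, submatrix_mul_equiv, hMA]
  obtain ⟨P, hP, hPA⟩ := exists_isUnit_transpose_mul_mul_eq_J (A := A')
    (by simp [A', hA, submatrix_neg]) (by rwa [det_reindex_self])
  have hPdet : IsUnit P.det := (isUnit_iff_isUnit_det P).mp hP
  have hPtdet : IsUnit Pᵀ.det := by rwa [det_transpose]
  refine ⟨P, hP, ?_⟩
  rw [SymplecticGroup.mem_iff', ← hPA]
  calc (P⁻¹ * M' * P)ᵀ * (Pᵀ * A' * P) * (P⁻¹ * M' * P)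
      = Pᵀ * (M'ᵀ * A' * M') * P := by
        rw [transpose_mul, transpose_mul, transpose_nonsing_inv]
        simp only [Matrix.mul_assoc]
        rw [nonsing_inv_mul_cancel_left _ _ hPtdet, mul_nonsing_inv_cancel_left _ _ hPdet]
    _ = Pᵀ * A' * P := by rw [hMA']

end Symplectic

section SkewCompletion
variable {F : Type*} [Field F] [LinearOrder F] [IsStrictOrderedRing F] {n ι : Type*} [Fintype n]
  [DecidableEq n] [Fintype ι] [DecidableEq ι]

lemma det_add_mul_mul_transpose_ne_zero
    {K : Matrix n n F} {C : Matrix n ι F} {A : Matrix ι ι F} (hK : Kᵀ = -K) (hKC : K * C = 0)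
    (hker : ∀ v, K *ᵥ v = 0 → ∃ a, C *ᵥ a = v) (hC : Function.Injective C.mulVec)
    (hA : A.det ≠ 0) : (K + C * A * Cᵀ).det ≠ 0 := by
  rw [Ne, ← exists_mulVec_eq_zero_iff]
  rintro ⟨v, hv0, hv⟩
  set w := (C * A * Cᵀ) *ᵥ v
  have hKw : K *ᵥ w = 0 := by simp [w, mulVec_mulVec, ← Matrix.mul_assoc, hKC]
  have hKv : K *ᵥ v = -w := by rwa [add_mulVec, add_eq_zero_iff_eq_neg] at hv
  -- `w ∈ ker K` is `K`-orthogonal to everything, in particular to `v`, while `K v = -w`.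
  have hw : w = 0 := by
    refine dotProduct_self_eq_zero.mp ?_
    have : w ⬝ᵥ K *ᵥ v = 0 := by
      rw [dotProduct_mulVec, ← mulVec_transpose, hK, neg_mulVec, hKw, neg_zero, zero_dotProduct]
    rwa [hKv, dotProduct_neg, neg_eq_zero] at this
  obtain ⟨a, rfl⟩ := hker v (by rw [hKv, hw, neg_zero])
  have hCtv : Cᵀ *ᵥ (C *ᵥ a) = 0 := by
    refine eq_zero_of_mulVec_eq_zero hA (hC ?_)
    simpa [w, mulVec_mulVec, Matrix.mul_assoc] using hw
  refine hv0 (dotProduct_self_eq_zero.mp ?_)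
  rw [dotProduct_mulVec, ← mulVec_transpose, hCtv, zero_dotProduct]

theorem exists_skew_det_ne_zero_transpose_mul_mul_eq
    {K M : Matrix n n F} (hK : Kᵀ = -K) (hMK : Mᵀ * K * M = K)
    (hfix : ∀ v, K *ᵥ v = 0 → Mᵀ *ᵥ v = v) (heven : Even (finrank F (ker K.mulVecLin))) :
    ∃ K' : Matrix n n F, K'ᵀ = -K' ∧ K'.det ≠ 0 ∧ Mᵀ * K' * M = K' := by
  obtain ⟨k, hk⟩ := heven
  let e : (Fin k ⊕ Fin k → F) ≃ₗ[F] ker K.mulVecLin := .ofFinrankEq _ _ (by simp [hk])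
  let C := LinearMap.toMatrix' ((ker K.mulVecLin).subtype ∘ₗ e.toLinearMap)
  have hC (a) : C *ᵥ a = e a := LinearMap.toMatrix'_mulVec _ a
  have hKC : K * C = 0 := ext_iff_mulVec.mpr fun a => by
    rw [← mulVec_mulVec, hC, zero_mulVec]
    exact (e a).2
  have hMC : Mᵀ * C = C := ext_iff_mulVec.mpr fun a => by
    rw [← mulVec_mulVec, hC, hfix _ (e a).2]
  refine ⟨K + C * J (Fin k) F * Cᵀ, ?_, ?_, ?_⟩
  · simp [hK, J_transpose, Matrix.mul_assoc, add_comm]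
  · refine det_add_mul_mul_transpose_ne_zero hK hKC (fun v hv => ?_) (fun a b hab => ?_)
      (isUnit_det_J _ _).ne_zero
    · exact ⟨e.symm ⟨v, hv⟩, by simp [hC]⟩
    · simpa [hC, Subtype.ext_iff] using hab
  · have hCM : Cᵀ * M = Cᵀ := by rw [← transpose_transpose M, ← transpose_mul, hMC]
    calc Mᵀ * (K + C * J (Fin k) F * Cᵀ) * M
        = Mᵀ * K * M + (Mᵀ * C) * J (Fin k) F * (Cᵀ * M) := by
          simp only [Matrix.mul_add, Matrix.add_mul, Matrix.mul_assoc]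
      _ = K + C * J (Fin k) F * Cᵀ := by rw [hMK, hMC, hCM]

end SkewCompletion

section BlockMatrices
variable {R : Type*} [CommRing R] {m n : Type*} (A : Matrix m n R)

def blockSkew : Matrix (m ⊕ n) (m ⊕ n) R := fromBlocks 0 (-A) Aᵀ 0

lemma blockSkew_transpose : (blockSkew A)ᵀ = -blockSkew A := by
  simp [blockSkew, fromBlocks_transpose, fromBlocks_neg]

lemma finrank_ker_blockSkew_add_two_mul_rank [Fintype m] [Fintype n] {F : Type*} [Field F]
    (A : Matrix m n F) :
    finrank F (ker (blockSkew A).mulVecLin) + 2 * A.rank = Fintype.card m + Fintype.card n := by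
  let e := LinearEquiv.sumArrowLequivProdArrow m n F F
  have hker : (ker (blockSkew A).mulVecLin).map (e : (m ⊕ n → F) →ₗ[F] _) =
      (ker Aᵀ.mulVecLin).prod (ker A.mulVecLin) := by
    ext ⟨a, b⟩
    rw [Submodule.mem_map_equiv, show e.symm (a, b) = Sum.elim a b from rfl]
    simp [blockSkew, fromBlocks_mulVec, ← Sum.elim_zero_zero, Sum.elim_eq_iff, neg_mulVec,
      mulVec_transpose, and_comm]
  have hA := LinearMap.finrank_range_add_finrank_ker A.mulVecLin
  have hAt := LinearMap.finrank_range_add_finrank_ker Aᵀ.mulVecLin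
  rw [finrank_fintype_fun_eq_card] at hA hAt
  have hrank : finrank F (range Aᵀ.mulVecLin) = finrank F (range A.mulVecLin) := A.rank_transpose
  rw [← LinearEquiv.finrank_map_eq e, hker, Submodule.finrank_prod_eq, rank]
  omega

variable [Fintype m] [DecidableEq m] [DecidableEq n]

def blockConnection : Matrix (m ⊕ n) (m ⊕ n) R := fromBlocks 1 A Aᵀ (Aᵀ * A - 1)

lemma blockConnection_transpose : (blockConnection A)ᵀ = blockConnection A := by
  simp [blockConnection, fromBlocks_transpose, transpose_sub]

variable [Fintype n]

lemma blockConnection_mul_blockSkew_mul_blockConnection :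
    blockConnection A * blockSkew A * blockConnection A = -blockSkew A := by
  simp only [blockConnection, blockSkew, fromBlocks_multiply, fromBlocks_neg]
  congr 1 <;>
    simp only [Matrix.add_mul, Matrix.mul_sub, Matrix.sub_mul, Matrix.mul_one, Matrix.one_mul,
      Matrix.mul_zero, Matrix.zero_mul, Matrix.mul_neg, Matrix.neg_mul, Matrix.mul_assoc] <;> abel

lemma exists_blockConnection_sq_eq_one_add_mul_blockSkew :
    ∃ Y, blockConnection A ^ 2 = 1 + Y * blockSkew A :=
  ⟨fromBlocks (-(A * Aᵀ)) A (Aᵀ - Aᵀ * A * Aᵀ) (Aᵀ * A), by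
    simp only [sq, blockConnection, blockSkew, fromBlocks_multiply, ← fromBlocks_one,
      fromBlocks_add]
    congr 1 <;>
      simp only [Matrix.mul_sub, Matrix.sub_mul, Matrix.mul_one, Matrix.one_mul, Matrix.mul_zero,
        Matrix.mul_neg, Matrix.neg_mul, Matrix.mul_assoc] <;> abel⟩

lemma transpose_blockConnection_sq_mul_blockSkew_mul_blockConnection_sq :
    (blockConnection A ^ 2)ᵀ * blockSkew A * blockConnection A ^ 2 = blockSkew A := by
  set L := blockConnection A
  rw [transpose_pow, blockConnection_transpose, sq]
  calc L * L * blockSkew A * (L * L) = L * (L * blockSkew A * L) * L := by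
        simp only [Matrix.mul_assoc]
    _ = blockSkew A := by
        rw [blockConnection_mul_blockSkew_mul_blockConnection, Matrix.mul_neg, Matrix.neg_mul,
          blockConnection_mul_blockSkew_mul_blockConnection, neg_neg]

lemma transpose_blockConnection_sq_mulVec_of_mulVec_eq_zero {v : m ⊕ n → R}
    (hv : blockSkew A *ᵥ v = 0) : (blockConnection A ^ 2)ᵀ *ᵥ v = v := by
  obtain ⟨Y, hY⟩ := exists_blockConnection_sq_eq_one_add_mul_blockSkew A
  rw [transpose_pow, blockConnection_transpose, hY, add_mulVec, one_mulVec, ← mulVec_mulVec, hv,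
    mulVec_zero, add_zero]

end BlockMatrices

end Matrix

lemma Sym2.sum_ite_mem_mk {α M : Type*} [Fintype α] [DecidableEq α] [AddCommMonoid M] {a b : α}
    (hab : a ≠ b) (c : α → M) : ∑ u, (if u ∈ s(a, b) then c u else 0) = c a + c b := by
  rw [← Finset.sum_filter, show Finset.univ.filter (· ∈ s(a, b)) = {a, b} by ext; simp,
    Finset.sum_pair hab]

def SimpleGraph.edgeIncMatrix (R : Type*) [Zero R] [One R] : Matrix V G.edgeSet R :=
  Matrix.of fun u f => if u ∈ (f : Sym2 V) then 1 else 0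

lemma transpose_edgeIncMatrix_mul_edgeIncMatrix_apply {R : Type*} [NonAssocSemiring R]
    (f g : G.edgeSet) :
    ((G.edgeIncMatrix R)ᵀ * G.edgeIncMatrix R) f g =
      (if touches G (.inr f) (.inr g) then 1 else 0) + if f = g then 1 else 0 := by
  obtain ⟨f, hf⟩ := f
  induction f using Sym2.ind with | _ a b => ?_
  have hab : a ≠ b := G.ne_of_adj hf
  simp only [mul_apply, transpose_apply, SimpleGraph.edgeIncMatrix, of_apply, ite_mul, one_mul,
    zero_mul]
  rw [Sym2.sum_ite_mem_mk hab]
  have htouch :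
      touches G (.inr ⟨s(a, b), hf⟩) (.inr g) ↔ a ∈ (g : Sym2 V) ∨ b ∈ (g : Sym2 V) := by
    simp [touches, sVerts]
  have heq : ⟨s(a, b), hf⟩ = g ↔ a ∈ (g : Sym2 V) ∧ b ∈ (g : Sym2 V) := by
    rw [Sym2.mem_and_mem_iff hab, Subtype.ext_iff, eq_comm]
  rw [if_congr htouch rfl rfl, if_congr heq rfl rfl]
  split_ifs <;> simp_all

lemma connLQ_eq_blockConnection : connLQ G = (G.edgeIncMatrix ℚ).blockConnection := by
  ext (u | f) (w | g) <;>
    simp [connLQ, connL, blockConnection, one_apply,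
      transpose_edgeIncMatrix_mul_edgeIncMatrix_apply, touches, sVerts] <;>
    simp [SimpleGraph.edgeIncMatrix]

/-- Symplectic Kirby connection: if the total number `v + e` of simplices is even,
say `v + e = 2l`, then `L²` is similar over `ℚ` to a symplectic matrix. -/
theorem symplectic_kirby (l : ℕ)
    (h : Fintype.card V + Fintype.card G.edgeSet = 2 * l) :
    ∃ (eqv : Simplex G ≃ (Fin l ⊕ Fin l))
      (P : Matrix (Fin l ⊕ Fin l) (Fin l ⊕ Fin l) ℚ),
      IsUnit P ∧
        P⁻¹ * (Matrix.reindex eqv eqv (connLQ G ^ 2)) * P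
          ∈ Matrix.symplecticGroup (Fin l) ℚ := by
  set N := G.edgeIncMatrix ℚ
  have heven : Even (finrank ℚ (ker (blockSkew N).mulVecLin)) := by
    have := finrank_ker_blockSkew_add_two_mul_rank N
    exact ⟨l - N.rank, by omega⟩
  obtain ⟨K, hK, hdet, hMK⟩ := exists_skew_det_ne_zero_transpose_mul_mul_eq
    (blockSkew_transpose N) (transpose_blockConnection_sq_mul_blockSkew_mul_blockConnection_sq N)
    (fun _ => transpose_blockConnection_sq_mulVec_of_mulVec_eq_zero N) heven
  have hcard : Fintype.card (Simplex G) = Fintype.card (Fin l ⊕ Fin l) := by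
    rw [Fintype.card_sum, h, Fintype.card_sum, Fintype.card_fin, two_mul]
  rw [connLQ_eq_blockConnection]
  exact ⟨Fintype.equivOfCardEq hcard,
    exists_isUnit_inv_mul_reindex_mul_mem_symplecticGroup _ hK hdet hMK⟩
end
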